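/- arXiv:2111.11493 — 2 statements merged into one kernel-verified Lean document; each statement's English description precedes it below -/
import Mathlib

section
/- If Π₋(θ)ψ = 0 for a spinor ψ (a vector in ℂ⁴), then Π₋(θ − 2φ)(e^{−γ₅φ}ψ) = 0 for any φ ∈ ℝ. That is, chiral bag boundary conditions form an orbit under chiral transformations. -/
open Complex Matrix

theorem chiral_bag_orbit
    (γn γ5 : Matrix (Fin 4) (Fin 4) ℂ)
    (hn : γn * γn = 1) (h5 : γ5 * γ5 = 1)
    (hanti : γ5 * γn + γn * γ5 = 0)
    (ε : ℝ) (hε : ε = 1 ∨ ε = -1)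
    (Pm : ℝ → Matrix (Fin 4) (Fin 4) ℂ)
    (hPm : ∀ θ : ℝ, Pm θ = (1/2 : ℂ) •
      (1 - (Complex.I * ε) • (γ5 * ((Real.cosh θ : ℂ) • 1 + (Real.sinh θ : ℂ) • γ5) * γn)))
    (θ φ : ℝ) (ψ : Fin 4 → ℂ)
    (hψ : (Pm θ).mulVec ψ = 0) :
    (Pm (θ - 2 * φ)).mulVec
      (((Real.cosh φ : ℂ) • (1 : Matrix (Fin 4) (Fin 4) ℂ)
        - (Real.sinh φ : ℂ) • γ5).mulVec ψ) = 0 := by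
  have hn5 : γn * γ5 = -(γ5 * γn) := eq_neg_of_add_eq_zero_right hanti
  set A : ℝ → Matrix (Fin 4) (Fin 4) ℂ :=
    fun a => (Real.cosh a : ℂ) • 1 + (Real.sinh a : ℂ) • γ5 with hA
  have hAmul : ∀ a b : ℝ, A a * A b = A (a + b) := by
    intro a b
    simp only [hA, Real.cosh_add, Real.sinh_add]
    push_cast
    simp only [Matrix.add_mul, Matrix.mul_add, smul_mul_assoc, mul_smul_comm, h5,
      one_mul, mul_one]
    module
  have hcomm : ∀ a : ℝ, γ5 * A a = A a * γ5 := by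
    intro a
    simp only [hA]
    rw [Matrix.mul_add, Matrix.add_mul, mul_smul_comm, mul_smul_comm, smul_mul_assoc,
      smul_mul_assoc, one_mul, mul_one]
  have hnA : ∀ b : ℝ, γn * A b = A (-b) * γn := by
    intro b
    simp only [hA, Real.cosh_neg, Real.sinh_neg]
    rw [Matrix.mul_add, Matrix.add_mul, mul_smul_comm, mul_smul_comm, smul_mul_assoc,
      smul_mul_assoc, one_mul, mul_one, hn5]
    module
  have key : Pm (θ - 2 * φ) * A (-φ) = A (-φ) * Pm θ := by
    rw [hPm, hPm]
    show (1/2 : ℂ) • (1 - (Complex.I * ε) • (γ5 * A (θ - 2*φ) * γn)) * A (-φ)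
        = A (-φ) * ((1/2 : ℂ) • (1 - (Complex.I * ε) • (γ5 * A θ * γn)))
    rw [smul_mul_assoc, mul_smul_comm, Matrix.sub_mul, Matrix.mul_sub, one_mul, mul_one,
      smul_mul_assoc, mul_smul_comm]
    have harg : θ - 2*φ + φ = θ - φ := by ring
    have harg2 : -φ + θ = θ - φ := by ring
    have h1a : γ5 * A (θ - 2*φ) * γn * A (-φ) = γ5 * (A (θ - φ) * γn) := by
      simp only [mul_assoc, hnA, neg_neg]
      rw [← mul_assoc (A (θ - 2*φ)) (A φ) γn, hAmul, harg]
    have h1b : A (-φ) * (γ5 * A θ * γn) = γ5 * (A (θ - φ) * γn) := by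
      rw [← mul_assoc, ← mul_assoc, ← hcomm, mul_assoc γ5, hAmul, harg2, mul_assoc]
    rw [h1a.trans h1b.symm]
  have hE : (Real.cosh φ : ℂ) • (1 : Matrix (Fin 4) (Fin 4) ℂ)
      - (Real.sinh φ : ℂ) • γ5 = A (-φ) := by
    simp [hA, Real.cosh_neg, Real.sinh_neg, sub_eq_add_neg]
  rw [hE, Matrix.mulVec_mulVec, key, ← Matrix.mulVec_mulVec, hψ, Matrix.mulVec_zero]
end

section
/- The matrices 𝒫₊ := Π₊Π₊†/cosh²(θ) and 𝒫₋ := Π₋†Π₋/cosh²(θ) are Hermitian idempotents (orthogonal projectors). -/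
set_option maxHeartbeats 4000000


open Complex Matrix

theorem hermitian_projectors
    (γn γ5 : Matrix (Fin 4) (Fin 4) ℂ)
    (hn : γn * γn = 1) (h5 : γ5 * γ5 = 1)
    (hanti : γ5 * γn + γn * γ5 = 0)
    (hnH : γn.conjTranspose = γn) (h5H : γ5.conjTranspose = γ5)
    (θ : ℝ)
    (Pp Pm Qp Qm : Matrix (Fin 4) (Fin 4) ℂ)
    (hPp : Pp = (1/2 : ℂ) •
      (1 + Complex.I • (γ5 * ((Real.cosh θ : ℂ) • 1 + (Real.sinh θ : ℂ) • γ5) * γn)))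
    (hPm : Pm = (1/2 : ℂ) •
      (1 - Complex.I • (γ5 * ((Real.cosh θ : ℂ) • 1 + (Real.sinh θ : ℂ) • γ5) * γn)))
    (hQp : Qp = ((Real.cosh θ ^ 2 : ℝ) : ℂ)⁻¹ • (Pp * Pp.conjTranspose))
    (hQm : Qm = ((Real.cosh θ ^ 2 : ℝ) : ℂ)⁻¹ • (Pm.conjTranspose * Pm)) :
    Qp.conjTranspose = Qp ∧ Qp * Qp = Qp ∧
    Qm.conjTranspose = Qm ∧ Qm * Qm = Qm := by

  set c : ℂ := (Real.cosh θ : ℂ) with hcdef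
  set s : ℂ := (Real.sinh θ : ℂ) with hsdef
  have hc0 : c ≠ 0 := by
    rw [hcdef]
    exact_mod_cast Complex.ofReal_ne_zero.2 (ne_of_gt (Real.cosh_pos θ))
  have hcs : c * c = 1 + s * s := by
    have h := Real.cosh_sq_sub_sinh_sq θ
    have h' : (Real.cosh θ : ℂ) ^ 2 - (Real.sinh θ : ℂ) ^ 2 = 1 := by
      exact_mod_cast congrArg (Complex.ofReal) h
    rw [hcdef, hsdef]; linear_combination h'
  have hcoef : ((Real.cosh θ ^ 2 : ℝ) : ℂ)⁻¹ = (c * c)⁻¹ := by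
    have h : ((Real.cosh θ ^ 2 : ℝ) : ℂ) = c * c := by rw [hcdef]; push_cast; ring
    rw [h]
  have hcst : (starRingEnd ℂ) c = c := by rw [hcdef]; exact Complex.conj_ofReal _
  have hsst : (starRingEnd ℂ) s = s := by rw [hsdef]; exact Complex.conj_ofReal _
  have star2 : (starRingEnd ℂ) (2:ℂ) = 2 := Complex.conj_ofNat 2
  clear_value c s
  rw [hcoef] at hQp hQm
  have hng : γn * γ5 = -(γ5 * γn) := eq_neg_of_add_eq_zero_right hanti
  have h2 : ∀ x, γn * (γ5 * x) = -(γ5 * (γn * x)) := by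
    intro x; rw [← mul_assoc, hng, ← mul_assoc]; simp
  have h3 : ∀ x, γn * (γn * x) = x := by
    intro x; rw [← mul_assoc, hn, one_mul]
  have h4 : ∀ x, γ5 * (γ5 * x) = x := by
    intro x; rw [← mul_assoc, h5, one_mul]
  have hQp' : Qp = (2*c)⁻¹ • (c • (1 : Matrix (Fin 4) (Fin 4) ℂ)
      + s • γ5 + Complex.I • (γ5 * γn)) := by
    rw [hQp, hPp]
    simp only [conjTranspose_smul, conjTranspose_mul, conjTranspose_add,
      conjTranspose_sub, conjTranspose_one, hnH, h5H,
      Complex.star_def, Complex.conj_I, map_inv₀, _root_.map_mul,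
      neg_smul, star_inv₀, star_one, hcst, hsst, map_div₀, _root_.map_one]
    simp only [mul_add, add_mul, mul_sub, sub_mul, smul_mul_assoc,
      mul_smul_comm, smul_smul, smul_add, smul_sub, smul_neg, neg_mul,
      mul_neg, mul_one, one_mul, mul_assoc, hng, h2, h3, h4, hn, h5, neg_neg]
    match_scalars
    all_goals try simp only [star2, hcst, hsst, Complex.I_sq]
    all_goals try field_simp
    all_goals try ring_nf
    all_goals try simp only [Complex.I_sq]
    all_goals try ring_nf
    all_goals first
      | ring1
      | linear_combination (2*c) * hcs
      | linear_combination (-(2*c)) * hcs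
      | linear_combination (2*s) * hcs
      | linear_combination (-(2*s)) * hcs
      | linear_combination (2*Complex.I) * hcs
      | linear_combination (-(2*Complex.I)) * hcs
      | linear_combination hcs
      | linear_combination (-1:ℂ) * hcs
      | linear_combination (2*Complex.I*s) * hcs
      | linear_combination (-(2*Complex.I*s)) * hcs
      | linear_combination (2*Complex.I*c) * hcs
      | linear_combination (-(2*Complex.I*c)) * hcs
  have hQm' : Qm = (2*c)⁻¹ • (c • (1 : Matrix (Fin 4) (Fin 4) ℂ)
      - s • γ5 - Complex.I • (γ5 * γn)) := by
    rw [hQm, hPm]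
    simp only [conjTranspose_smul, conjTranspose_mul, conjTranspose_add,
      conjTranspose_sub, conjTranspose_one, hnH, h5H,
      Complex.star_def, Complex.conj_I, map_inv₀, _root_.map_mul,
      neg_smul, star_inv₀, star_one, hcst, hsst, map_div₀, _root_.map_one]
    simp only [mul_add, add_mul, mul_sub, sub_mul, smul_mul_assoc,
      mul_smul_comm, smul_smul, smul_add, smul_sub, smul_neg, neg_mul,
      mul_neg, mul_one, one_mul, mul_assoc, hng, h2, h3, h4, hn, h5, neg_neg]
    match_scalars
    all_goals try simp only [star2, hcst, hsst, Complex.I_sq]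
    all_goals try field_simp
    all_goals try ring_nf
    all_goals try simp only [Complex.I_sq]
    all_goals try ring_nf
    all_goals first
      | ring1
      | linear_combination (2*c) * hcs
      | linear_combination (-(2*c)) * hcs
      | linear_combination (2*s) * hcs
      | linear_combination (-(2*s)) * hcs
      | linear_combination (2*Complex.I) * hcs
      | linear_combination (-(2*Complex.I)) * hcs
      | linear_combination hcs
      | linear_combination (-1:ℂ) * hcs
      | linear_combination (2*Complex.I*s) * hcs
      | linear_combination (-(2*Complex.I*s)) * hcs
      | linear_combination (2*Complex.I*c) * hcs
      | linear_combination (-(2*Complex.I*c)) * hcs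
  have hinvst : (starRingEnd ℂ) (2*c)⁻¹ = (2*c)⁻¹ := by
    rw [map_inv₀, _root_.map_mul, star2, hcst]
  refine ⟨?_, ?_, ?_, ?_⟩
  · rw [hQp']
    simp only [conjTranspose_smul, conjTranspose_add, conjTranspose_sub,
      conjTranspose_mul, conjTranspose_one, hnH, h5H, Complex.star_def,
      Complex.conj_I, hcst, hsst, hinvst, neg_smul, hng]
    module
  · rw [hQp']
    simp only [smul_mul_assoc, mul_smul_comm, smul_smul, mul_add, add_mul,
      mul_sub, sub_mul, smul_add, smul_sub, smul_neg, neg_mul, mul_neg, mul_one, one_mul,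
      mul_assoc, hng, h2, h3, h4, hn, h5, neg_neg]
    match_scalars
    all_goals try field_simp
    all_goals try ring_nf
    all_goals try simp only [Complex.I_sq]
    all_goals try ring_nf
    all_goals first
      | ring1
      | linear_combination (2*c) * hcs
      | linear_combination (-(2*c)) * hcs
      | linear_combination (2*s) * hcs
      | linear_combination (-(2*s)) * hcs
      | linear_combination (2*Complex.I) * hcs
      | linear_combination (-(2*Complex.I)) * hcs
      | linear_combination hcs
      | linear_combination (-1:ℂ) * hcs
      | linear_combination (2*Complex.I*s) * hcs
      | linear_combination (-(2*Complex.I*s)) * hcs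
      | linear_combination (2*Complex.I*c) * hcs
      | linear_combination (-(2*Complex.I*c)) * hcs
  · rw [hQm']
    simp only [conjTranspose_smul, conjTranspose_add, conjTranspose_sub,
      conjTranspose_mul, conjTranspose_one, hnH, h5H, Complex.star_def,
      Complex.conj_I, hcst, hsst, hinvst, neg_smul, hng]
    module
  · rw [hQm']
    simp only [smul_mul_assoc, mul_smul_comm, smul_smul, mul_add, add_mul,
      mul_sub, sub_mul, smul_add, smul_sub, smul_neg, neg_mul, mul_neg, mul_one, one_mul,
      mul_assoc, hng, h2, h3, h4, hn, h5, neg_neg]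
    match_scalars
    all_goals try field_simp
    all_goals try ring_nf
    all_goals try simp only [Complex.I_sq]
    all_goals try ring_nf
    all_goals first
      | ring1
      | linear_combination (2*c) * hcs
      | linear_combination (-(2*c)) * hcs
      | linear_combination (2*s) * hcs
      | linear_combination (-(2*s)) * hcs
      | linear_combination (2*Complex.I) * hcs
      | linear_combination (-(2*Complex.I)) * hcs
      | linear_combination hcs
      | linear_combination (-1:ℂ) * hcs
      | linear_combination (2*Complex.I*s) * hcs
      | linear_combination (-(2*Complex.I*s)) * hcs
      | linear_combination (2*Complex.I*c) * hcs
      | linear_combination (-(2*Complex.I*c)) * hcs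
end
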